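/- Bounded integral of loose upcrossing counts: let (X, μ) be a probability space, T measure preserving, f integrable, h ≥ 0 with ∫ h dμ < ε, and rationals α < β with β − α > δ > 0. Then there is a measurable set A with μ(A) < 4ε/δ such that ∫_{X∖A} υ(x, f, h, α, β) dμ(x) < ∞, where υ(x, f, h, α, β) is the supremum of lengths of loose upcrossing sequences for α, β, f, h at x. -/

import Mathlib

/-!
By the maximal ergodic theorem, the set `A₀` of points at which some Birkhoff average of `h`
exceeds `δ / 4` has measure at most `(4 / δ) ∫ h < 4ε / δ`. Off `A₀` the averages of `f + h`
exceed those of `f` by at most `δ / 4`, so infinitely many loose upcrossings of `[α, β]` force the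
averages of `f` to cross `[α, β - δ / 4]` infinitely often. Applying the maximal ergodic theorem to
`f - c₂` and `c₁ - f` on the largest forward-invariant set on which the averages keep crossing
`[c₁, c₂]` shows that this happens only on a null set. Hence `υ` is a.e. finite off `A₀`, and
adding to `A₀` the small set where `υ` exceeds a large `M` gives `A`.
-/

open MeasureTheory Filter
open scoped ENNReal NNReal

/-- The Birkhoff average `(1/(m+1)) Σ_{j=0}^{m} f(T^j x)`. -/
noncomputable def birkAvg {X : Type*} (T : X → X) (f : X → ℝ) (x : X) (m : ℕ) : ℝ :=
  (∑ j ∈ Finset.range (m + 1), f (T^[j] x)) / (m + 1)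

/-- `u 0 < v 0 < u 1 < v 1 < ⋯ < u (N-1) < v (N-1)` is an upcrossing sequence of
length `N` for `α, β` for the Birkhoff averages of `f` at `x`. -/
def Upcross {X : Type*} (T : X → X) (f : X → ℝ) (α β : ℝ) (x : X) (N : ℕ)
    (u v : ℕ → ℕ) : Prop :=
  (∀ i < N, u i < v i) ∧ (∀ i, i + 1 < N → v i < u (i + 1)) ∧
  (∀ i < N, birkAvg T f x (u i) < α) ∧ (∀ i < N, β < birkAvg T f x (v i))

/-- A loose upcrossing sequence of length `N` for `α, β, f, h` at `x`. -/
def LooseUpcross {X : Type*} (T : X → X) (f h : X → ℝ) (α β : ℝ) (x : X) (N : ℕ)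
    (u v : ℕ → ℕ) : Prop :=
  (∀ i < N, u i < v i) ∧ (∀ i, i + 1 < N → v i < u (i + 1)) ∧
  (∀ i < N, birkAvg T f x (u i) < α) ∧
  (∀ i < N, β < birkAvg T (fun y => f y + h y) x (v i))

/-- `τ(x, f, α, β)`: the supremum of lengths of upcrossing sequences. -/
noncomputable def upcrossCount {X : Type*} (T : X → X) (f : X → ℝ) (α β : ℝ)
    (x : X) : ℝ≥0∞ :=
  ⨆ N ∈ {N : ℕ | ∃ u v : ℕ → ℕ, Upcross T f α β x N u v}, (N : ℝ≥0∞)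

/-- `υ(x, f, h, α, β)`: the supremum of lengths of loose upcrossing sequences. -/
noncomputable def looseCount {X : Type*} (T : X → X) (f h : X → ℝ) (α β : ℝ)
    (x : X) : ℝ≥0∞ :=
  ⨆ N ∈ {N : ℕ | ∃ u v : ℕ → ℕ, LooseUpcross T f h α β x N u v}, (N : ℝ≥0∞)

section Orbit

variable {X : Type*} {T : X → X}

noncomputable def birkhoffMax (T : X → X) (g : X → ℝ) : ℕ → X → ℝ
  | 0 => 0
  | n + 1 => fun x => max (birkhoffMax T g n x) (birkhoffSum T g (n + 1) x)

lemma birkhoffMax_nonneg (g : X → ℝ) (n : ℕ) (x : X) : 0 ≤ birkhoffMax T g n x := by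
  induction n with
  | zero => exact le_rfl
  | succ n ih => exact ih.trans (le_max_left _ _)

lemma birkhoffMax_le_succ (g : X → ℝ) (n : ℕ) (x : X) :
    birkhoffMax T g n x ≤ birkhoffMax T g (n + 1) x :=
  le_max_left _ _

lemma birkhoffMax_succ (g : X → ℝ) (n : ℕ) (x : X) :
    birkhoffMax T g (n + 1) x = max 0 (g x + birkhoffMax T g n (T x)) := by
  induction n generalizing x with
  | zero => simp [birkhoffMax, birkhoffSum_one]
  | succ n ih =>
    simp only [birkhoffMax] at ih ⊢
    rw [ih, birkhoffSum_succ' T g (n + 1), max_assoc, max_add_add_left]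

lemma birkhoffSum_le_birkhoffMax (g : X → ℝ) (n : ℕ) (x : X) :
    birkhoffSum T g n x ≤ birkhoffMax T g n x := by
  cases n with
  | zero => exact le_of_eq (birkhoffSum_zero T g x)
  | succ n => exact le_max_right _ _

lemma exists_birkhoffSum_pos_of_birkhoffMax_pos {g : X → ℝ} {x : X} :
    ∀ {n}, 0 < birkhoffMax T g n x → ∃ k, 0 < birkhoffSum T g k x
  | 0, h => absurd h (lt_irrefl 0)
  | n + 1, h => (lt_max_iff.1 h).elim exists_birkhoffSum_pos_of_birkhoffMax_pos (⟨n + 1, ·⟩)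

lemma exists_birkhoffSum_iterate_lt_of_frequently {g : X → ℝ} {x : X} {a b : ℝ}
    (h : ∃ᶠ n in atTop, birkhoffSum T g n x < a * n) (hab : a < b) (j : ℕ) :
    ∃ n : ℕ, birkhoffSum T g n (T^[j] x) < b * n := by
  have hlarge : ∀ᶠ n : ℕ in atTop, j ≤ n ∧ b * j - birkhoffSum T g j x < (b - a) * n :=
    (eventually_ge_atTop j).and <|
      (tendsto_natCast_atTop_atTop.const_mul_atTop (sub_pos.2 hab)).eventually_gt_atTop _
  obtain ⟨n, hn, hjn, hbig⟩ := (h.and_eventually hlarge).exists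
  obtain ⟨m, rfl⟩ := Nat.exists_eq_add_of_le hjn
  refine ⟨m, ?_⟩
  rw [birkhoffSum_add] at hn
  push_cast at hn hbig
  linarith

lemma exists_lt_birkhoffSum_iterate_of_frequently {g : X → ℝ} {x : X} {a b : ℝ}
    (h : ∃ᶠ n in atTop, b * n < birkhoffSum T g n x) (hab : a < b) (j : ℕ) :
    ∃ n : ℕ, a * n < birkhoffSum T g n (T^[j] x) := by
  have h' : ∃ᶠ n in atTop, birkhoffSum T (-g) n x < -b * n :=
    h.mono fun n hn => by rw [birkhoffSum_neg]; linarith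
  obtain ⟨n, hn⟩ := exists_birkhoffSum_iterate_lt_of_frequently h' (neg_lt_neg hab) j
  exact ⟨n, by rw [birkhoffSum_neg] at hn; linarith⟩

lemma birkAvg_eq (g : X → ℝ) (x : X) (m : ℕ) :
    birkAvg T g x m = birkhoffSum T g (m + 1) x / (m + 1) :=
  rfl

lemma birkAvg_lt_iff {g : X → ℝ} {x : X} {m : ℕ} {a : ℝ} :
    birkAvg T g x m < a ↔ birkhoffSum T g (m + 1) x < a * (m + 1 : ℕ) := by
  rw [birkAvg_eq, Nat.cast_succ, div_lt_iff₀ (by positivity)]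

lemma lt_birkAvg_iff {g : X → ℝ} {x : X} {m : ℕ} {a : ℝ} :
    a < birkAvg T g x m ↔ a * (m + 1 : ℕ) < birkhoffSum T g (m + 1) x := by
  rw [birkAvg_eq, Nat.cast_succ, lt_div_iff₀ (by positivity)]

end Orbit

section LooseUpcross

variable {X : Type*} {T : X → X} {f h : X → ℝ} {α β : ℝ} {x : X} {N : ℕ} {u v : ℕ → ℕ}

def looseUpcrossSet (T : X → X) (f h : X → ℝ) (α β : ℝ) (N : ℕ) : Set X :=
  {x | ∃ u v : ℕ → ℕ, LooseUpcross T f h α β x N u v}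

lemma LooseUpcross.mono {N' : ℕ} (hu : LooseUpcross T f h α β x N' u v) (hN : N ≤ N') :
    LooseUpcross T f h α β x N u v :=
  ⟨fun i hi => hu.1 i (hi.trans_le hN), fun i hi => hu.2.1 i (hi.trans_le hN),
    fun i hi => hu.2.2.1 i (hi.trans_le hN), fun i hi => hu.2.2.2 i (hi.trans_le hN)⟩

lemma LooseUpcross.le_apply (hu : LooseUpcross T f h α β x N u v) :
    ∀ i < N, i ≤ u i
  | 0, _ => Nat.zero_le _
  | i + 1, hi =>
    (LooseUpcross.le_apply hu i (by omega)).trans_lt ((hu.1 i (by omega)).trans (hu.2.1 i hi))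

lemma LooseUpcross.congr {u' v' : ℕ → ℕ} (huv : LooseUpcross T f h α β x N u v)
    (hu : ∀ i < N, u i = u' i) (hv : ∀ i < N, v i = v' i) :
    LooseUpcross T f h α β x N u' v' := by
  refine ⟨fun i hi => ?_, fun i hi => ?_, fun i hi => ?_, fun i hi => ?_⟩
  · rw [← hu i hi, ← hv i hi]; exact huv.1 i hi
  · rw [← hv i (by omega), ← hu _ hi]; exact huv.2.1 i hi
  · rw [← hu i hi]; exact huv.2.2.1 i hi
  · rw [← hv i hi]; exact huv.2.2.2 i hi

lemma looseUpcrossSet_antitone : Antitone (looseUpcrossSet T f h α β) :=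
  fun _ _ hN _ ⟨u, v, hu⟩ => ⟨u, v, hu.mono hN⟩

lemma looseCount_le_of_notMem (hx : x ∉ looseUpcrossSet T f h α β N) :
    looseCount T f h α β x ≤ N :=
  iSup₂_le fun _ ⟨u, v, hu⟩ => Nat.cast_le.2 <| not_lt.1 fun hNM =>
    hx (looseUpcrossSet_antitone hNM.le ⟨u, v, hu⟩)

lemma frequently_of_looseCount_eq_top (hx : looseCount T f h α β x = ⊤) :
    (∃ᶠ n in atTop, birkhoffSum T f n x < α * n) ∧
      ∃ᶠ n in atTop, β * n < birkhoffSum T (fun y => f y + h y) n x := by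
  have hmem : ∀ N, x ∈ looseUpcrossSet T f h α β N := fun N => by
    by_contra hN
    exact (ENNReal.natCast_ne_top N) (top_le_iff.1 (hx ▸ looseCount_le_of_notMem hN))
  simp only [frequently_atTop]
  constructor <;> intro k <;> obtain ⟨u, v, hu⟩ := hmem (k + 1)
  · exact ⟨u k + 1, by have := hu.le_apply k k.lt_succ_self; omega,
      birkAvg_lt_iff.1 (hu.2.2.1 k k.lt_succ_self)⟩
  · exact ⟨v k + 1, by have := hu.le_apply k k.lt_succ_self; have := hu.1 k k.lt_succ_self; omega,
      lt_birkAvg_iff.1 (hu.2.2.2 k k.lt_succ_self)⟩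

lemma looseCount_congr {f' h' : X → ℝ} (hf : ∀ n, birkhoffSum T f n x = birkhoffSum T f' n x)
    (hfh : ∀ n, birkhoffSum T (fun y => f y + h y) n x = birkhoffSum T (fun y => f' y + h' y) n x) :
    looseCount T f h α β x = looseCount T f' h' α β x := by
  have hAvg : ∀ {g g' : X → ℝ}, (∀ n, birkhoffSum T g n x = birkhoffSum T g' n x) →
      birkAvg T g x = birkAvg T g' x := fun hg => funext fun m => by
    rw [birkAvg_eq, birkAvg_eq, hg]
  unfold looseCount LooseUpcross
  rw [hAvg hf, hAvg hfh]

end LooseUpcross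

section Measurability

variable {X : Type*} [MeasurableSpace X] {μ : Measure X} {T : X → X} {f h : X → ℝ} {α β : ℝ}

lemma measurable_birkhoffSum (hT : Measurable T) {g : X → ℝ} (hg : Measurable g) (n : ℕ) :
    Measurable (birkhoffSum T g n) :=
  Finset.measurable_sum _ fun j _ => hg.comp (hT.iterate j)

lemma measurable_birkhoffMax (hT : Measurable T) {g : X → ℝ} (hg : Measurable g) (n : ℕ) :
    Measurable (birkhoffMax T g n) := by
  induction n with
  | zero => exact measurable_const
  | succ n ih => exact ih.max (measurable_birkhoffSum hT hg _)

lemma measurable_birkAvg (hT : Measurable T) {g : X → ℝ} (hg : Measurable g) (m : ℕ) :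
    Measurable fun x => birkAvg T g x m :=
  (measurable_birkhoffSum hT hg (m + 1)).div_const _

lemma measurableSet_looseUpcross (hT : Measurable T) (hf : Measurable f) (hh : Measurable h)
    (N : ℕ) (u v : ℕ → ℕ) : MeasurableSet {x | LooseUpcross T f h α β x N u v} := by
  have hlow := fun m => measurable_birkAvg hT hf m
  have hup := fun m => measurable_birkAvg hT (hf.add hh) m
  refine measurableSet_setOfPred.2 ?_
  unfold LooseUpcross
  fun_prop

lemma measurableSet_looseUpcrossSet (hT : Measurable T) (hf : Measurable f) (hh : Measurable h)
    (N : ℕ) : MeasurableSet (looseUpcrossSet T f h α β N) := by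
  -- Only the first `N` terms of `u` and `v` matter, so countably many choices suffice.
  let extend (w : Fin N → ℕ) (i : ℕ) : ℕ := if hi : i < N then w ⟨i, hi⟩ else 0
  have : looseUpcrossSet T f h α β N = ⋃ p : (Fin N → ℕ) × (Fin N → ℕ),
      {x | LooseUpcross T f h α β x N (extend p.1) (extend p.2)} := by
    refine Set.Subset.antisymm (fun x ⟨u, v, huv⟩ => Set.mem_iUnion.2 ⟨(fun i => u i, fun i => v i),
      huv.congr (fun i hi => by simp [extend, hi]) (fun i hi => by simp [extend, hi])⟩) ?_
    exact Set.iUnion_subset fun p x hx => ⟨_, _, hx⟩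
  rw [this]
  exact .iUnion fun p => measurableSet_looseUpcross hT hf hh N _ _

lemma measurable_looseCount (hT : Measurable T) (hf : Measurable f) (hh : Measurable h) :
    Measurable (looseCount T f h α β) := by
  have : looseCount T f h α β =
      fun x => ⨆ N : ℕ, (looseUpcrossSet T f h α β N).indicator (fun _ => (N : ℝ≥0∞)) x := by
    ext x
    classical
    exact iSup_congr fun N => iSup_eq_if _
  rw [this]
  exact .iSup fun N => measurable_const.indicator (measurableSet_looseUpcrossSet hT hf hh N)

lemma exists_measure_lt_setLIntegral_compl_lt_top [IsFiniteMeasure μ] {F : X → ℝ≥0∞}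
    (hF : Measurable F) {A₀ : Set X} (hA₀ : MeasurableSet A₀) {r : ℝ≥0∞} (hr : μ A₀ < r)
    (hfin : ∀ᵐ x ∂μ, x ∉ A₀ → F x < ⊤) :
    ∃ A, MeasurableSet A ∧ μ A < r ∧ ∫⁻ x in Aᶜ, F x ∂μ < ⊤ := by
  set B : ℕ → Set X := fun M => A₀ ∪ {x | M < F x}
  have hB : ∀ M, MeasurableSet (B M) := fun M => hA₀.union (measurableSet_lt measurable_const hF)
  have hanti : Antitone B := fun M M' hM =>
    Set.union_subset_union_right A₀ fun x (hx : (M' : ℝ≥0∞) < F x) => (Nat.cast_le.2 hM).trans_lt hx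
  have hlim := tendsto_measure_iInter_atTop (μ := μ) (fun M => (hB M).nullMeasurableSet) hanti
    ⟨0, measure_ne_top μ _⟩
  have hInter : μ (⋂ M, B M) ≤ μ A₀ := by
    refine measure_mono_ae ?_
    filter_upwards [hfin] with x hx hxB
    by_contra hxA
    obtain ⟨M, hM⟩ := ENNReal.exists_nat_gt (hx hxA).ne
    have hMF : (M : ℝ≥0∞) < F x := (Set.mem_iInter.1 hxB M).resolve_left hxA
    exact lt_asymm hMF hM
  obtain ⟨M, hM⟩ := (hlim.eventually (gt_mem_nhds (hInter.trans_lt hr))).exists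
  refine ⟨B M, hB M, hM, ?_⟩
  calc ∫⁻ x in (B M)ᶜ, F x ∂μ ≤ ∫⁻ _ in (B M)ᶜ, (M : ℝ≥0∞) ∂μ :=
        setLIntegral_mono measurable_const fun x hx => not_lt.1 fun h => hx (Or.inr h)
    _ = M * μ (B M)ᶜ := setLIntegral_const _ _
    _ < ⊤ := ENNReal.mul_lt_top (ENNReal.natCast_lt_top M) (measure_lt_top μ _)

end Measurability

namespace MeasureTheory.MeasurePreserving

variable {X : Type*} [MeasurableSpace X] {μ : Measure X} {T : X → X}

lemma integrable_birkhoffSum (hT : MeasurePreserving T μ μ) {g : X → ℝ}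
    (hg : Integrable g μ) (n : ℕ) : Integrable (birkhoffSum T g n) μ :=
  integrable_finsetSum _ fun j _ => (hT.iterate j).integrable_comp_of_integrable hg

lemma integrable_birkhoffMax (hT : MeasurePreserving T μ μ) {g : X → ℝ}
    (hg : Integrable g μ) (n : ℕ) : Integrable (birkhoffMax T g n) μ := by
  induction n with
  | zero => exact integrable_zero X ℝ μ
  | succ n ih => exact ih.sup (hT.integrable_birkhoffSum hg _)

lemma setIntegral_birkhoffMax_pos_nonneg (hT : MeasurePreserving T μ μ)
    {g : X → ℝ} (hg : Measurable g) (hgi : Integrable g μ) {D : Set X} (hD : MeasurableSet D)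
    (hDT : D ⊆ T ⁻¹' D) (n : ℕ) :
    0 ≤ ∫ x in D ∩ {x | 0 < birkhoffMax T g (n + 1) x}, g x ∂μ := by
  set M := birkhoffMax T g (n + 1)
  set M' := birkhoffMax T g n
  have hM := measurable_birkhoffMax hT.measurable hg (n + 1)
  have hMi := hT.integrable_birkhoffMax hgi (n + 1)
  have hM'i := hT.integrable_birkhoffMax hgi n
  have hM'Ti : Integrable (fun x => M' (T x)) μ := hT.integrable_comp_of_integrable hM'i
  set s := D ∩ {x | 0 < M x}
  have hs : MeasurableSet s := hD.inter (measurableSet_lt measurable_const hM)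
  -- Garsia's identity: where `M` is positive, `M = g + M' ∘ T`.
  have hg_eq : ∀ x ∈ s, g x = M x - M' (T x) := fun x ⟨_, hx⟩ => by
    have h : M x = max 0 (g x + M' (T x)) := birkhoffMax_succ g n x
    rw [Set.mem_ofPred_eq, h, lt_max_iff, lt_self_iff_false, false_or] at hx
    rw [h, max_eq_right hx.le]; ring
  have hMs : ∫ x in s, M x ∂μ = ∫ x in D, M x ∂μ :=
    (setIntegral_eq_of_subset_of_forall_sdiff_eq_zero hD Set.inter_subset_left
      fun x hx => le_antisymm (not_lt.1 fun h => hx.2 ⟨hx.1, h⟩) (birkhoffMax_nonneg g _ x)).symm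
  have hM's : ∫ x in s, M' (T x) ∂μ ≤ ∫ x in D, M' x ∂μ := calc
    ∫ x in s, M' (T x) ∂μ ≤ ∫ x in T ⁻¹' D, M' (T x) ∂μ :=
      setIntegral_mono_set hM'Ti.integrableOn (.of_forall fun x => birkhoffMax_nonneg g n _)
        (.of_forall fun x hx => hDT hx.1)
    _ = ∫ x in D, M' x ∂μ := by
      have hM'm : AEStronglyMeasurable M' (μ.map T) := by
        rw [hT.map_eq]; exact hM'i.aestronglyMeasurable
      rw [← setIntegral_map hD hM'm hT.measurable.aemeasurable, hT.map_eq]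
  have hM'M : ∫ x in D, M' x ∂μ ≤ ∫ x in D, M x ∂μ :=
    setIntegral_mono hM'i.integrableOn hMi.integrableOn fun x => birkhoffMax_le_succ g n x
  rw [setIntegral_congr_fun hs hg_eq, integral_sub hMi.integrableOn hM'Ti.integrableOn]
  linarith

theorem setIntegral_birkhoffSum_pos_nonneg (hT : MeasurePreserving T μ μ)
    {g : X → ℝ} (hg : Measurable g) (hgi : Integrable g μ) {D : Set X} (hD : MeasurableSet D)
    (hDT : D ⊆ T ⁻¹' D) :
    0 ≤ ∫ x in D ∩ {x | ∃ n, 0 < birkhoffSum T g n x}, g x ∂μ := by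
  have hmono : Monotone fun n => D ∩ {x | 0 < birkhoffMax T g (n + 1) x} :=
    monotone_nat_of_le_succ fun n x hx =>
      ⟨hx.1, hx.2.trans_le (birkhoffMax_le_succ g (n + 1) x)⟩
  have hUnion : ⋃ n, D ∩ {x | 0 < birkhoffMax T g (n + 1) x} =
      D ∩ {x | ∃ n, 0 < birkhoffSum T g n x} := by
    ext x
    simp only [Set.mem_iUnion, Set.mem_inter_iff, Set.mem_ofPred_eq, exists_and_left]
    refine and_congr_right fun _ => ⟨fun ⟨n, hn⟩ => exists_birkhoffSum_pos_of_birkhoffMax_pos hn,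
      fun ⟨n, hn⟩ => ⟨n, hn.trans_le <| (birkhoffSum_le_birkhoffMax g n x).trans
        (birkhoffMax_le_succ g n x)⟩⟩
  have hlim := tendsto_setIntegral_of_monotone
    (fun n => hD.inter (measurableSet_lt measurable_const
      (measurable_birkhoffMax hT.measurable hg (n + 1)))) hmono hgi.integrableOn
  rw [hUnion] at hlim
  exact ge_of_tendsto' hlim fun n => hT.setIntegral_birkhoffMax_pos_nonneg hg hgi hD hDT n

theorem mul_measureReal_le_setIntegral [IsFiniteMeasure μ]
    (hT : MeasurePreserving T μ μ) {g : X → ℝ} (hg : Measurable g) (hgi : Integrable g μ)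
    {D : Set X} (hD : MeasurableSet D) (hDT : D ⊆ T ⁻¹' D) (c : ℝ) :
    c * μ.real (D ∩ {x | ∃ n : ℕ, c * n < birkhoffSum T g n x}) ≤
      ∫ x in D ∩ {x | ∃ n : ℕ, c * n < birkhoffSum T g n x}, g x ∂μ := by
  have h := hT.setIntegral_birkhoffSum_pos_nonneg (hg.sub measurable_const)
    (hgi.sub (integrable_const c)) hD hDT
  have hS : ∀ n x, birkhoffSum T (g - fun _ => c) n x = birkhoffSum T g n x - c * n := by
    simp [birkhoffSum, mul_comm]
  simp only [hS, sub_pos, Pi.sub_apply] at h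
  rw [integral_sub hgi.integrableOn (integrable_const c).integrableOn, setIntegral_const,
    smul_eq_mul] at h
  linarith

theorem measure_eq_zero_of_oscillates [IsFiniteMeasure μ]
    (hT : MeasurePreserving T μ μ) {g : X → ℝ} (hg : Measurable g) (hgi : Integrable g μ)
    {D : Set X} (hD : MeasurableSet D) (hDT : D ⊆ T ⁻¹' D) {c₁ c₂ : ℝ} (hc : c₁ < c₂)
    (hosc : ∀ x ∈ D, (∃ n : ℕ, birkhoffSum T g n x < c₁ * n) ∧
      ∃ n : ℕ, c₂ * n < birkhoffSum T g n x) :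
    μ D = 0 := by
  have hupper := hT.mul_measureReal_le_setIntegral hg hgi hD hDT c₂
  have hlower := hT.mul_measureReal_le_setIntegral hg.neg hgi.neg hD hDT (-c₁)
  have hsub_upper : D ⊆ {x | ∃ n : ℕ, c₂ * n < birkhoffSum T g n x} := fun x hx => (hosc x hx).2
  have hsub_lower : D ⊆ {x | ∃ n : ℕ, -c₁ * n < birkhoffSum T (-g) n x} := fun x hx => by
    obtain ⟨n, hn⟩ := (hosc x hx).1
    exact ⟨n, by rw [birkhoffSum_neg]; linarith⟩
  rw [Set.inter_eq_left.2 hsub_upper] at hupper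
  rw [Set.inter_eq_left.2 hsub_lower, Pi.neg_def, integral_neg] at hlower
  have : μ.real D ≤ 0 := by nlinarith [measureReal_nonneg (μ := μ) (s := D)]
  exact (measureReal_eq_zero_iff).1 (le_antisymm this measureReal_nonneg)

theorem ae_not_frequently_lt_and_frequently_gt [IsFiniteMeasure μ]
    (hT : MeasurePreserving T μ μ) {g : X → ℝ} (hg : Measurable g) (hgi : Integrable g μ)
    {a b : ℝ} (hab : a < b) :
    ∀ᵐ x ∂μ, ¬((∃ᶠ n in atTop, birkhoffSum T g n x < a * n) ∧
      ∃ᶠ n in atTop, b * n < birkhoffSum T g n x) := by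
  obtain ⟨c₁, hac₁, hc₁b⟩ := exists_between hab
  obtain ⟨c₂, hc₁c₂, hc₂b⟩ := exists_between hc₁b
  have hS := measurable_birkhoffSum hT.measurable hg
  set D₀ := (⋃ n : ℕ, {x | birkhoffSum T g n x < c₁ * n}) ∩
    ⋃ n : ℕ, {x | c₂ * n < birkhoffSum T g n x}
  have hD₀ : MeasurableSet D₀ :=
    (MeasurableSet.iUnion fun n => measurableSet_lt (hS n) measurable_const).inter
      (MeasurableSet.iUnion fun n => measurableSet_lt measurable_const (hS n))
  -- `D₀ ⊆ T ⁻¹' D₀` may fail, so pass to the largest subset of `D₀` for which it holds.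
  set D := ⋂ j, T^[j] ⁻¹' D₀
  have hD : MeasurableSet D := MeasurableSet.iInter fun j => hT.measurable.iterate j hD₀
  have hDT : D ⊆ T ⁻¹' D := fun x hx => Set.mem_iInter.2 fun j => by
    simpa only [Set.mem_preimage, Function.iterate_succ_apply] using Set.mem_iInter.1 hx (j + 1)
  have hμD : μ D = 0 := hT.measure_eq_zero_of_oscillates hg hgi hD hDT hc₁c₂ fun x hx => by
    simpa [D₀] using Set.mem_iInter.1 hx 0
  refine measure_mono_null (fun x hx => ?_) hμD
  obtain ⟨hlow, hhigh⟩ := not_not.1 hx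
  exact Set.mem_iInter.2 fun j => ⟨Set.mem_iUnion.2 (exists_birkhoffSum_iterate_lt_of_frequently
    hlow hac₁ j), Set.mem_iUnion.2 (exists_lt_birkhoffSum_iterate_of_frequently hhigh hc₂b j)⟩

lemma looseCount_ae_eq (hT : MeasurePreserving T μ μ) {f h f' h' : X → ℝ} {α β : ℝ}
    (hf : f =ᵐ[μ] f') (hh : h =ᵐ[μ] h') :
    looseCount T f h α β =ᵐ[μ] looseCount T f' h' α β := by
  have hS : ∀ {g g' : X → ℝ}, g =ᵐ[μ] g' →
      ∀ᵐ x ∂μ, ∀ n, birkhoffSum T g n x = birkhoffSum T g' n x := fun hg =>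
    ae_all_iff.2 fun n => hT.quasiMeasurePreserving.birkhoffSum_ae_eq_of_ae_eq hg n
  filter_upwards [hS hf, hS (hf.add hh)] with x using looseCount_congr

theorem exists_measure_lt_setLIntegral_looseCount_lt_top [IsFiniteMeasure μ]
    (hT : MeasurePreserving T μ μ) (hf : Measurable f) (hfi : Integrable f μ)
    (hh : Measurable h) (hhi : Integrable h μ) (hpos : 0 ≤ᵐ[μ] h) {ε δ : ℝ} (hδ : 0 < δ)
    (hε : ∫ x, h x ∂μ < ε) (hδ' : δ < β - α) :
    ∃ A, MeasurableSet A ∧ μ A < ENNReal.ofReal (4 * ε / δ) ∧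
      ∫⁻ x in Aᶜ, looseCount T f h α β x ∂μ < ⊤ := by
  set A₀ := {x | ∃ n : ℕ, δ / 4 * n < birkhoffSum T h n x}
  have hA₀ : MeasurableSet A₀ := by
    have := measurable_birkhoffSum hT.measurable hh
    exact measurableSet_setOfPred.2 (by fun_prop)
  have hμA₀ : μ A₀ < ENNReal.ofReal (4 * ε / δ) := by
    have hmax := hT.mul_measureReal_le_setIntegral hh hhi .univ (Set.subset_univ _) (δ / 4)
    rw [Set.univ_inter] at hmax
    have hle : ∫ x in A₀, h x ∂μ ≤ ∫ x, h x ∂μ := setIntegral_le_integral hhi hpos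
    have hlt : μ.real A₀ < 4 * ε / δ := by rw [lt_div_iff₀ hδ]; linarith
    rw [← ofReal_measureReal]
    exact (ENNReal.ofReal_lt_ofReal_iff_of_nonneg measureReal_nonneg).2 hlt
  refine exists_measure_lt_setLIntegral_compl_lt_top (measurable_looseCount hT.measurable hf hh)
    hA₀ hμA₀ ?_
  filter_upwards [hT.ae_not_frequently_lt_and_frequently_gt hf hfi
    (show α < β - δ / 4 by linarith)] with x hx hxA
  refine lt_top_iff_ne_top.2 fun htop => hx ?_
  obtain ⟨hlow, hhigh⟩ := frequently_of_looseCount_eq_top htop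
  refine ⟨hlow, hhigh.mono fun n hn => ?_⟩
  have hsum : birkhoffSum T (fun y => f y + h y) n x = birkhoffSum T f n x + birkhoffSum T h n x :=
    birkhoffSum_add' T f h n x
  have hsmall : birkhoffSum T h n x ≤ δ / 4 * n := not_lt.1 fun hn' => hxA ⟨n, hn'⟩
  linarith

end MeasureTheory.MeasurePreserving

theorem stmt_10_general {X : Type*} [MeasurableSpace X] (μ : Measure X) [IsProbabilityMeasure μ]
    (T : X → X) (hT : MeasurePreserving T μ μ)
    (f h : X → ℝ) (hf : Integrable f μ) (hh : Integrable h μ)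
    (hpos : ∀ x, 0 ≤ h x) (ε δ : ℝ) (hδ : 0 < δ)
    (hε : ∫ x, h x ∂μ < ε)
    (α β : ℚ) (hδ' : δ < (β : ℝ) - α) :
    ∃ A : Set X, MeasurableSet A ∧ μ A < ENNReal.ofReal (4 * ε / δ) ∧
      ∫⁻ x in Aᶜ, looseCount T f h α β x ∂μ < ⊤ := by
  have hf₁ := hf.aemeasurable.ae_eq_mk
  have hh₁ := hh.aemeasurable.ae_eq_mk
  obtain ⟨A, hA, hμA, hfin⟩ := hT.exists_measure_lt_setLIntegral_looseCount_lt_top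
    hf.aemeasurable.measurable_mk (hf.congr hf₁) hh.aemeasurable.measurable_mk (hh.congr hh₁)
    (hh₁.mono fun x hx => hx ▸ hpos x) hδ (by rwa [← integral_congr_ae hh₁]) hδ'
  refine ⟨A, hA, hμA, ?_⟩
  rwa [lintegral_congr_ae (ae_restrict_of_ae (hT.looseCount_ae_eq hf₁ hh₁))]

/-- under `∫ h dμ < ε`, `h ≥ 0`, `β − α > δ > 0`, there is a set `A` with
`μ(A) < 4ε/δ` such that the integral of the loose upcrossing count `υ(x, f, h, α, β)`
over `X ∖ A` is finite. -/
theorem stmt_10 {X : Type*} [MeasurableSpace X] (μ : Measure X) [IsProbabilityMeasure μ]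
    (T : X → X) (hT : MeasurePreserving T μ μ)
    (f h : X → ℝ) (hf : Integrable f μ) (hh : Integrable h μ)
    (hpos : ∀ x, 0 ≤ h x) (ε δ : ℝ) (hδ : 0 < δ)
    (hε : ∫ x, h x ∂μ < ε)
    (α β : ℚ) (hαβ : α < β) (hδ' : δ < (β : ℝ) - α) :
    ∃ A : Set X, MeasurableSet A ∧ μ A < ENNReal.ofReal (4 * ε / δ) ∧
      ∫⁻ x in Aᶜ, looseCount T f h α β x ∂μ < ⊤ :=
  stmt_10_general μ T hT f h hf hh hpos ε δ hδ hε α β hδ'
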